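/- arXiv:1001.3068 — 2 statements merged into one kernel-verified Lean document; each statement's English description precedes it below -/
import Mathlib

section
/- If m is an even integer with m > 0, then the coefficient of x^{m+1} in (x/log(1+x))^m is 0. -/
/-!
Let `σ = -x/(1+x)`, so that `1 + σ = 1/(1+x)` and therefore `log(1+σ) = -log(1+x)`, i.e.
`ℓ(σ) = (1+x) ℓ(x)`. For `F = ℓ⁻ᵐ` this reads `F = (1+x)^m F(σ) = ∑_d F_d (1+x)^m σ^d`.
For `d ≤ m` the term `(1+x)^m σ^d = (-x)^d (1+x)^(m-d)` is a polynomial of degree `m`, and for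
`d ≥ m + 2` it vanishes to order `m + 2`, so the coefficient of `x^(m+1)` on the right is
`(-1)^(m+1) F_{m+1}`. For even `m` this gives `F_{m+1} = -F_{m+1}`.
-/

open PowerSeries

noncomputable def ell : PowerSeries ℚ := PowerSeries.mk fun i => (-1)^i / (i+1)

namespace PowerSeries

section CommRing

variable {R : Type*} [CommRing R]

theorem coeff_mul_subst {b : R⟦X⟧} (hb : constantCoeff b = 0) (g f : R⟦X⟧) (n : ℕ) :
    coeff n (g * f.subst b) = ∑ d ∈ Finset.range (n + 1), coeff d f * coeff n (g * b ^ d) := by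
  have hsub := HasSubst.of_constantCoeff_zero' hb
  -- below degree `n + 1` only the truncation of `f` matters, since `X ^ (n + 1) ∣ b ^ (n + 1)`
  obtain ⟨c, rfl⟩ : X ∣ b := X_dvd_iff.mpr hb
  conv_lhs => rw [eq_X_pow_mul_shift_add_trunc (n + 1) f]
  rw [subst_add hsub, subst_mul hsub, subst_pow hsub, subst_X hsub, subst_coe hsub,
    Polynomial.aeval_eq_sum_range' (natDegree_trunc_lt f n), mul_add, map_add, mul_pow,
    mul_left_comm, mul_assoc, coeff_X_pow_mul', if_neg (by omega), zero_add, Finset.mul_sum,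
    map_sum]
  refine Finset.sum_congr rfl fun d hd => ?_
  rw [coeff_trunc, if_pos (Finset.mem_range.mp hd), mul_smul_comm, LinearMap.map_smul,
    smul_eq_mul]

theorem coeff_one_add_X_pow (n k : ℕ) : coeff k ((1 + X : R⟦X⟧) ^ n) = n.choose k := by
  have h : (1 + X : R⟦X⟧) ^ n = ((1 + Polynomial.X) ^ n : Polynomial R) := by push_cast; rfl
  rw [h, Polynomial.coeff_coe, Polynomial.coeff_one_add_X_pow]

theorem neg_X_pow (d : ℕ) : (-X : R⟦X⟧) ^ d = C ((-1) ^ d) * X ^ d := by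
  rw [neg_pow, map_pow, map_neg, map_one]

end CommRing

section Field

variable {K : Type*} [Field K]

variable (K) in
theorem mul_inv_one_add_X : (1 + X : K⟦X⟧) * (1 + X)⁻¹ = 1 :=
  PowerSeries.mul_inv_cancel _ (by simp)

variable (K) in
noncomputable def negDivOneAdd : K⟦X⟧ := -X * (1 + X)⁻¹

theorem constantCoeff_negDivOneAdd : constantCoeff (negDivOneAdd K) = 0 := by
  simp [negDivOneAdd]

theorem hasSubst_negDivOneAdd : HasSubst (negDivOneAdd K) :=
  HasSubst.of_constantCoeff_zero' constantCoeff_negDivOneAdd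

theorem one_add_negDivOneAdd : 1 + negDivOneAdd K = (1 + X)⁻¹ := by
  rw [negDivOneAdd]
  linear_combination -mul_inv_one_add_X K

theorem one_add_X_pow_mul_negDivOneAdd_pow (d : ℕ) :
    (1 + X) ^ d * negDivOneAdd K ^ d = (-X) ^ d := by
  rw [← mul_pow, negDivOneAdd]
  congr 1
  linear_combination (-X : K⟦X⟧) * mul_inv_one_add_X K

theorem subst_inv {b : K⟦X⟧} (hb : HasSubst b) {f : K⟦X⟧} (hf : constantCoeff f ≠ 0) :
    (f⁻¹).subst b = (f.subst b)⁻¹ := by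
  have h : (f⁻¹).subst b * f.subst b = 1 := by
    rw [← subst_mul hb, PowerSeries.inv_mul_cancel f hf, ← coe_substAlgHom hb, map_one]
  refine (eq_inv_iff_mul_eq_one ?_).2 h
  exact right_ne_zero_of_mul_eq_one
    (by rw [← map_mul, h, map_one] : _ * constantCoeff (f.subst b) = 1)

theorem subst_negDivOneAdd_inv_one_add_X :
    ((1 + X)⁻¹ : K⟦X⟧).subst (negDivOneAdd K) = 1 + X := by
  rw [subst_inv hasSubst_negDivOneAdd (by simp), ← coe_substAlgHom hasSubst_negDivOneAdd, map_add,
    map_one, coe_substAlgHom, subst_X hasSubst_negDivOneAdd, one_add_negDivOneAdd]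
  exact ((eq_inv_iff_mul_eq_one (by simp)).2 (mul_inv_one_add_X K)).symm

theorem derivative_negDivOneAdd : d⁄dX K (negDivOneAdd K) = -((1 + X)⁻¹) ^ 2 := by
  rw [negDivOneAdd, Derivation.leibniz, derivative_inv']
  simp only [map_add, Derivation.map_one_eq_zero, derivative_X, zero_add, mul_one, smul_eq_mul,
    mul_neg, neg_mul, neg_neg, map_neg]
  linear_combination (1 + X : K⟦X⟧)⁻¹ * mul_inv_one_add_X K

theorem coeff_one_add_X_pow_mul_negDivOneAdd_pow_of_le {m d : ℕ} (h : d ≤ m) :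
    coeff (m + 1) ((1 + X) ^ m * negDivOneAdd K ^ d) = 0 := by
  rw [← Nat.sub_add_cancel h, pow_add, mul_assoc, one_add_X_pow_mul_negDivOneAdd_pow, neg_X_pow,
    mul_left_comm, coeff_C_mul, coeff_mul_X_pow', if_pos (by omega), coeff_one_add_X_pow,
    Nat.choose_eq_zero_of_lt (by omega), Nat.cast_zero, mul_zero]

theorem coeff_one_add_X_pow_mul_negDivOneAdd_pow_succ (m : ℕ) :
    coeff (m + 1) ((1 + X) ^ m * negDivOneAdd K ^ (m + 1)) = (-1) ^ (m + 1) := by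
  rw [pow_succ, ← mul_assoc, one_add_X_pow_mul_negDivOneAdd_pow, negDivOneAdd, ← mul_assoc,
    ← pow_succ, neg_X_pow, mul_assoc, coeff_C_mul, coeff_X_pow_mul', if_pos le_rfl, Nat.sub_self,
    coeff_zero_eq_constantCoeff_apply]
  simp

end Field

section RatAlgebra

variable {K : Type*} [Field K] [Algebra ℚ K]

theorem derivative_log : d⁄dX K (log K) = (1 + X)⁻¹ := by
  rw [deriv_log, eq_inv_iff_mul_eq_one (by simp)]
  ext (_ | n) <;> simp [mul_add, pow_succ]

theorem log_subst_negDivOneAdd : (log K).subst (negDivOneAdd K) = -log K := by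
  have := algebraRat.charZero K
  refine derivative.ext ?_ ?_
  · rw [derivative_subst hasSubst_negDivOneAdd, derivative_log, subst_negDivOneAdd_inv_one_add_X,
      derivative_negDivOneAdd, map_neg, derivative_log]
    linear_combination -(1 + X : K⟦X⟧)⁻¹ * mul_inv_one_add_X K
  · rw [map_neg, constantCoeff_log, neg_zero]
    exact constantCoeff_subst_eq_zero constantCoeff_negDivOneAdd _ constantCoeff_log

end RatAlgebra

section CharZero

variable {K : Type*} [Field K] [CharZero K]

theorem coeff_succ_eq_zero_of_eq_one_add_X_pow_mul_subst {m : ℕ} (hm : Even m) {f : K⟦X⟧}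
    (hf : f = (1 + X) ^ m * f.subst (negDivOneAdd K)) : coeff (m + 1) f = 0 := by
  have h := congrArg (coeff (m + 1)) hf
  rw [coeff_mul_subst constantCoeff_negDivOneAdd, Finset.sum_range_succ,
    Finset.sum_eq_zero fun d hd => by
      rw [coeff_one_add_X_pow_mul_negDivOneAdd_pow_of_le (Finset.mem_range_succ_iff.mp hd),
        mul_zero],
    zero_add, coeff_one_add_X_pow_mul_negDivOneAdd_pow_succ, hm.add_one.neg_one_pow,
    mul_neg_one] at h
  exact self_eq_neg.mp h

end CharZero

end PowerSeries

theorem X_mul_ell : X * ell = log ℚ := by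
  ext (_ | n)
  · simp
  · rw [coeff_succ_X_mul, ell, coeff_mk, coeff_log, if_neg n.succ_ne_zero]
    push_cast
    ring

theorem constantCoeff_ell : constantCoeff ell = 1 := by
  simp [ell]

theorem ell_subst_negDivOneAdd : ell.subst (negDivOneAdd ℚ) = (1 + X) * ell := by
  have h := congrArg (subst (negDivOneAdd ℚ)) X_mul_ell
  rw [subst_mul hasSubst_negDivOneAdd, subst_X hasSubst_negDivOneAdd, log_subst_negDivOneAdd,
    ← X_mul_ell] at h
  set E := ell.subst (negDivOneAdd ℚ)
  rw [negDivOneAdd] at h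
  have h' : (1 + X)⁻¹ * E = ell := mul_left_cancel₀ X_ne_zero (by linear_combination -h)
  linear_combination (1 + X) * h' - E * mul_inv_one_add_X ℚ

theorem coeff_even_zero_general (m : ℕ) (heven : Even m) :
    PowerSeries.coeff (m + 1) (ell⁻¹ ^ m) = 0 := by
  apply coeff_succ_eq_zero_of_eq_one_add_X_pow_mul_subst heven
  rw [subst_pow hasSubst_negDivOneAdd,
    subst_inv hasSubst_negDivOneAdd (by simp [constantCoeff_ell]),
    ell_subst_negDivOneAdd, PowerSeries.mul_inv_rev, mul_pow, mul_left_comm, ← mul_pow,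
    mul_inv_one_add_X, one_pow, mul_one]

theorem coeff_even_zero (m : ℕ) (heven : Even m) (hm : 0 < m) :
    PowerSeries.coeff (m + 1) (ell⁻¹ ^ m) = 0 :=
  coeff_even_zero_general m heven
end

section
/- For all nonnegative integers i_1,...,i_r with ∑ i_j ≥ 1, the p-adic valuation satisfies ν_p((∑ i_j)!/(i_1!···i_r!)) − ν_p(∑ i_j) ≥ − min_{j : i_j > 0} ν_p(i_j). -/
/-!
Splitting off the `j`-th part, the multinomial coefficient is `n.choose (I j)` times another
multinomial coefficient, and `k * n.choose k = n * (n - 1).choose (k - 1)` shows that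
`n ∣ k * n.choose k`.
-/

open Finset
open Nat

theorem padicValNat_le_padicValNat_choose_add {p : ℕ} [Fact p.Prime] {n k : ℕ} (hk : 0 < k)
    (hkn : k ≤ n) : padicValNat p n ≤ padicValNat p (n.choose k) + padicValNat p k := by
  obtain ⟨m, rfl⟩ := Nat.exists_eq_add_one_of_ne_zero (hk.trans_le hkn).ne'
  obtain ⟨l, rfl⟩ := Nat.exists_eq_add_one_of_ne_zero hk.ne'
  have hchoose : m.choose l ≠ 0 := (Nat.choose_pos (by omega)).ne'
  have hchoose' : (m + 1).choose (l + 1) ≠ 0 := (Nat.choose_pos hkn).ne'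
  calc padicValNat p (m + 1) ≤ padicValNat p ((m + 1) * m.choose l) := by
        rw [padicValNat.mul m.add_one_ne_zero hchoose]; omega
    _ = padicValNat p ((m + 1).choose (l + 1)) + padicValNat p (l + 1) := by
        rw [add_one_mul_choose_eq, padicValNat.mul hchoose' l.add_one_ne_zero]

theorem Nat.multinomial_eq_choose_mul_multinomial_erase {α : Type*} [DecidableEq α]
    {s : Finset α} {a : α} (ha : a ∈ s) (f : α → ℕ) :
    multinomial s f = (∑ i ∈ s, f i).choose (f a) * multinomial (s.erase a) f := by
  rw [← add_sum_erase s f ha, ← multinomial_insert (notMem_erase a s), insert_erase ha]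

theorem val_multinomial_lower_general {p : ℕ} (hp : p.Prime) {r : ℕ} (I : Fin r → ℕ) :
    ∀ j, 0 < I j →
      (padicValNat p (Nat.multinomial Finset.univ I) : ℤ) -
          padicValNat p (∑ j, I j) ≥ -(padicValNat p (I j) : ℤ) := by
  have := Fact.mk hp
  intro j hj
  have hle : I j ≤ ∑ i, I i := single_le_sum (fun i _ => Nat.zero_le (I i)) (mem_univ j)
  have hchoose := padicValNat_le_padicValNat_choose_add (p := p) hj hle
  rw [multinomial_eq_choose_mul_multinomial_erase (mem_univ j),
    padicValNat.mul (Nat.choose_pos hle).ne' (multinomial_pos _ _).ne']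
  omega

theorem val_multinomial_lower {p : ℕ} (hp : p.Prime) {r : ℕ} (I : Fin r → ℕ)
    (h : 1 ≤ ∑ j, I j) :
    ∀ j, 0 < I j →
      (padicValNat p (Nat.multinomial Finset.univ I) : ℤ) -
          padicValNat p (∑ j, I j) ≥ -(padicValNat p (I j) : ℤ) :=
  val_multinomial_lower_general hp I
end
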